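/- arXiv:2311.05259 — 3 statements merged into one kernel-verified Lean document; each statement's English description precedes it below -/
import Mathlib

section
/- The 3×2 real matrix with rows (-sin χ, -sin χ), (l_f cos χ, l_f cos χ), (l_fw sin χ - κ cos χ, -l_fw sin χ + κ cos χ) has rank 2 if and only if χ ≠ arctan(κ/l_fw) (mod π). -/
open Real Matrix

theorem stmt0 (l_f l_fw κ χ : ℝ) (hlf : 0 < l_f) (hlfw : 0 < l_fw) (hκ : 0 < κ)
    (hχ : χ ∈ Set.Ioo (-(π/2)) (π/2)) :
    (!![-Real.sin χ, -Real.sin χ;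
        l_f * Real.cos χ, l_f * Real.cos χ;
        l_fw * Real.sin χ - κ * Real.cos χ, -(l_fw * Real.sin χ) + κ * Real.cos χ] :
      Matrix (Fin 3) (Fin 2) ℝ).rank = 2 ↔ χ ≠ Real.arctan (κ / l_fw) := by
  obtain ⟨h1, h2⟩ := hχ
  have hc : 0 < Real.cos χ := Real.cos_pos_of_mem_Ioo ⟨h1, h2⟩
  set A : Matrix (Fin 3) (Fin 2) ℝ :=
    !![-Real.sin χ, -Real.sin χ;
        l_f * Real.cos χ, l_f * Real.cos χ;
        l_fw * Real.sin χ - κ * Real.cos χ, -(l_fw * Real.sin χ) + κ * Real.cos χ] with hA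
  have hdiff : (l_fw * Real.sin χ - κ * Real.cos χ ≠ 0) ↔ χ ≠ Real.arctan (κ / l_fw) := by
    constructor
    · intro hd he
      apply hd
      have : Real.tan χ = κ / l_fw := by rw [he, Real.tan_arctan]
      rw [Real.tan_eq_sin_div_cos] at this
      field_simp at this
      linarith
    · intro hne hd
      apply hne
      have ht : Real.tan χ = κ / l_fw := by
        rw [Real.tan_eq_sin_div_cos]
        field_simp
        linarith
      rw [← ht, Real.arctan_tan h1 h2]
  constructor
  · intro hr
    rw [← hdiff]
    intro hd
    -- columns are equal, so rank ≤ 1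
    have hfac : A = (!![-Real.sin χ; l_f * Real.cos χ; 0] : Matrix (Fin 3) (Fin 1) ℝ) *
        (!![1, 1] : Matrix (Fin 1) (Fin 2) ℝ) := by
      ext i j
      fin_cases i <;> fin_cases j <;>
        simp [hA, Matrix.mul_apply, Fin.sum_univ_succ] <;> linarith
    have := Matrix.rank_mul_le_left (!![-Real.sin χ; l_f * Real.cos χ; 0] :
        Matrix (Fin 3) (Fin 1) ℝ) (!![1, 1] : Matrix (Fin 1) (Fin 2) ℝ)
    have hle := Matrix.rank_le_card_width (!![-Real.sin χ; l_f * Real.cos χ; 0] :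
        Matrix (Fin 3) (Fin 1) ℝ)
    rw [← hfac] at this
    simp at hle
    omega
  · intro hne
    rw [← hdiff] at hne
    have hrk : (Aᵀ * A).rank = A.rank := Matrix.rank_transpose_mul_self A
    have hdet : (Aᵀ * A).det ≠ 0 := by
      have hB : Aᵀ * A =
          !![(Real.sin χ)^2 + (l_f * Real.cos χ)^2 + (l_fw * Real.sin χ - κ * Real.cos χ)^2,
             (Real.sin χ)^2 + (l_f * Real.cos χ)^2 - (l_fw * Real.sin χ - κ * Real.cos χ)^2;
             (Real.sin χ)^2 + (l_f * Real.cos χ)^2 - (l_fw * Real.sin χ - κ * Real.cos χ)^2,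
             (Real.sin χ)^2 + (l_f * Real.cos χ)^2 + (l_fw * Real.sin χ - κ * Real.cos χ)^2] := by
        ext i j
        fin_cases i <;> fin_cases j <;>
          simp [Matrix.mul_apply, Fin.sum_univ_three, Matrix.vecHead, Matrix.vecTail, Matrix.transpose_apply, Function.comp, hA] <;> ring
      have : (Aᵀ * A).det =
          4 * ((Real.sin χ)^2 + (l_f * Real.cos χ)^2) *
            (l_fw * Real.sin χ - κ * Real.cos χ)^2 := by
        rw [hB, Matrix.det_fin_two_of]
        ring
      rw [this]
      have hb : (0:ℝ) < (Real.sin χ)^2 + (l_f * Real.cos χ)^2 := by positivity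
      have hd2 : (0:ℝ) < (l_fw * Real.sin χ - κ * Real.cos χ)^2 := by positivity
      positivity
    have hunit : IsUnit (Aᵀ * A) := (Matrix.isUnit_iff_isUnit_det _).2 (isUnit_iff_ne_zero.2 hdet)
    have := Matrix.rank_of_isUnit _ hunit
    rw [hrk] at this
    simpa using this
end

section
/- For fixed α ∈ (0, π/2), l_f, l_b > 0, D > 0, and 0 < mg − L, the continuous function F(χ) = (mg−L)(sin(α+χ) + (l_f/l_b) cos χ sin α) + D(cos(α+χ) + (l_f/l_b) cos χ cos α) satisfies F(0) > 0 and F(−π/2 − α) = (l_f/l_b)·cos(π/2 + α)·((mg−L) sin α + D cos α) ≤ 0 when α ∈ (0, π/2) makes cos(π/2+α) < 0; hence by the intermediate value theorem there exists χ* ∈ (−π/2 − α, 0) with F(χ*) = 0. -/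
open Real

theorem stmt9 (m g l_f l_b D L α : ℝ)
    (hm : 0 < m) (hg : 0 < g) (hlf : 0 < l_f) (hlb : 0 < l_b)
    (hD : 0 < D) (hL : 0 < m * g - L) (hα : α ∈ Set.Ioo 0 (π/2)) :
    let F : ℝ → ℝ := fun χ =>
      (m * g - L) * (Real.sin (α + χ) + (l_f / l_b) * Real.cos χ * Real.sin α)
        + D * (Real.cos (α + χ) + (l_f / l_b) * Real.cos χ * Real.cos α)
    0 < F 0 ∧ F (-(π/2) - α) ≤ 0 ∧ ∃ χstar ∈ Set.Ioo (-(π/2) - α) 0, F χstar = 0 := by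
  intro F
  obtain ⟨hα0, hα1⟩ := hα
  have hsin : 0 < Real.sin α := Real.sin_pos_of_pos_of_lt_pi hα0 (by linarith [Real.pi_pos])
  have hcos : 0 < Real.cos α := Real.cos_pos_of_mem_Ioo ⟨by linarith, hα1⟩
  have hr : 0 < l_f / l_b := div_pos hlf hlb
  have hF0 : 0 < F 0 := by
    simp only [F, add_zero, Real.cos_zero, mul_one]
    positivity
  have hFa : F (-(π/2) - α) < 0 := by
    have h1 : α + (-(π/2) - α) = -(π/2) := by ring
    have h2 : Real.cos (-(π/2) - α) = -Real.sin α := by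
      rw [show -(π/2) - α = -(π/2 + α) by ring, Real.cos_neg, Real.cos_add]
      simp
    simp only [F, h1, h2, Real.sin_neg, Real.cos_neg, Real.sin_pi_div_two,
      Real.cos_pi_div_two]
    nlinarith [mul_pos hr (mul_pos hsin hsin), mul_pos hD (mul_pos hr (mul_pos hsin hcos))]
  refine ⟨hF0, le_of_lt hFa, ?_⟩
  have hab : -(π/2) - α ≤ 0 := by linarith [Real.pi_pos]
  have hcont : ContinuousOn F (Set.Icc (-(π/2) - α) 0) := by
    apply Continuous.continuousOn; fun_prop
  obtain ⟨χ, hχ, hFχ⟩ := intermediate_value_Ioo hab hcont ⟨hFa, hF0⟩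
  exact ⟨χ, hχ, hFχ⟩
end

section
/- The equation sin(α+χ) + (l_f/l_b) cos χ sin α = 0 with α ∈ (0, π/2), l_f, l_b > 0 has a solution χ ∈ (−π, 0); moreover any solution satisfies sin(α+χ) < 0, i.e., χ < −α. -/
open Real

theorem stmt16 (α l_f l_b : ℝ) (hα : α ∈ Set.Ioo 0 (π/2))
    (hlf : 0 < l_f) (hlb : 0 < l_b) :
    (∃ χ ∈ Set.Ioo (-π) 0,
        Real.sin (α + χ) + (l_f / l_b) * Real.cos χ * Real.sin α = 0)
    ∧ ∀ χ ∈ Set.Ioo (-π) 0,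
        Real.sin (α + χ) + (l_f / l_b) * Real.cos χ * Real.sin α = 0 →
        Real.sin (α + χ) < 0 ∧ χ < -α := by
  obtain ⟨hα0, hα2⟩ := hα
  have hπ := Real.pi_pos
  have hsinα : 0 < Real.sin α := Real.sin_pos_of_pos_of_lt_pi hα0 (by linarith)
  have hcosα : 0 < Real.cos α := Real.cos_pos_of_mem_Ioo ⟨by linarith, hα2⟩
  have hk : 0 < l_f / l_b := div_pos hlf hlb
  constructor
  · set f : ℝ → ℝ := fun χ => Real.sin (α + χ) + (l_f / l_b) * Real.cos χ * Real.sin α with hf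
    have hcont : ContinuousOn f (Set.Icc (-(π/2)) (-α)) := by fun_prop
    have hab : -(π/2) ≤ -α := by linarith
    have hsub := intermediate_value_Icc hab hcont
    have hfa : f (-(π/2)) = -Real.cos α := by
      simp [hf, Real.sin_add]
    have hfb : f (-α) = (l_f / l_b) * Real.cos α * Real.sin α := by
      simp [hf]
    have h0 : (0:ℝ) ∈ Set.Icc (f (-(π/2))) (f (-α)) := by
      rw [hfa, hfb]
      constructor
      · linarith
      · positivity
    obtain ⟨χ, hχmem, hχ⟩ := hsub h0
    exact ⟨χ, ⟨by linarith [hχmem.1], by linarith [hχmem.2]⟩, hχ⟩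
  · rintro χ ⟨hχ1, hχ2⟩ heq
    have hcos : 0 < Real.cos χ := by
      by_contra h
      push_neg at h
      have hχle : χ ≤ -(π/2) := by
        by_contra h2
        push_neg at h2
        exact absurd (Real.cos_pos_of_mem_Ioo ⟨h2, by linarith⟩) (not_lt.mpr h)
      have hsin : Real.sin (α + χ) < 0 :=
        Real.sin_neg_of_neg_of_neg_pi_lt (by linarith) (by linarith)
      have : (l_f / l_b) * Real.cos χ * Real.sin α ≤ 0 := by
        have := mul_nonpos_of_nonpos_of_nonneg
          (mul_nonpos_of_nonneg_of_nonpos (le_of_lt hk) h) (le_of_lt hsinα)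
        linarith [this]
      linarith
    have hsinneg : Real.sin (α + χ) < 0 := by nlinarith [mul_pos (mul_pos hk hcos) hsinα]
    refine ⟨hsinneg, ?_⟩
    by_contra h
    push_neg at h
    have : 0 ≤ Real.sin (α + χ) :=
      Real.sin_nonneg_of_nonneg_of_le_pi (by linarith) (by linarith)
    linarith
end
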